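/- Let G_k (k ≥ 2) be the bipartite graph with vertices {x, y} ∪ {u_i, v_i : 1 ≤ i ≤ 2k−2} and edges {x,y} together with {x,u_{2j−1}} and {x,v_{2j−1}} for 1 ≤ j ≤ k−1. Suppose G is a graph containing G_k as an induced subgraph and G = t-interval-PCG(T, I_1,…,I_t), where for each 1 ≤ i ≤ 2k−2 the path P_T(u_i, v_i) is a longest path in the minimal subtree of T spanning {u_i, u_{i+1},…,u_{2k−2}, y, v_{2k−2},…,v_i}. Then t ≥ k. -/

import Mathlib

open SimpleGraph

/-- An edge-weighted tree: a connected acyclic simple graph together with a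
symmetric nonnegative real weight function on (pairs of) vertices. -/
structure WTree (W : Type) where
  g : SimpleGraph W
  conn : g.Connected
  acyclic : g.IsAcyclic
  wt : W → W → ℝ
  wt_symm : ∀ u v, wt u v = wt v u
  wt_nonneg : ∀ u v, 0 ≤ wt u v

namespace WTree

variable {W : Type}

/-- The total weight of a walk in a weighted tree. -/
def walkWeight (T : WTree W) : {u v : W} → T.g.Walk u v → ℝ
  | _, _, .nil => 0
  | _, _, .cons (u := a) (v := b) _ p => T.wt a b + T.walkWeight p

/-- The weighted distance between two vertices of a weighted tree:
the total weight of the unique path joining them. -/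
noncomputable def dist (T : WTree W) (u v : W) : ℝ :=
  letI := Classical.decEq W
  T.walkWeight (((T.conn.preconnected u v).some.toPath : T.g.Path u v) : T.g.Walk u v)

/-- A leaf of a tree: a vertex with exactly one neighbor. -/
def IsLeaf (T : WTree W) (v : W) : Prop := ∃! u, T.g.Adj v u

end WTree
/-- `G` is realized as a pairwise compatibility graph by the weighted tree `T`,
the set `I` of real numbers, and the map `f` identifying the vertices of `G`
with the leaves of `T`. -/
def IsPCGOn {V W : Type} (G : SimpleGraph V) (T : WTree W) (I : Set ℝ) (f : V → W) : Prop :=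
  Function.Injective f ∧ (∀ v, T.IsLeaf (f v)) ∧ (∀ w, T.IsLeaf w → ∃ v, f v = w) ∧
    ∀ u v, u ≠ v → (G.Adj u v ↔ T.dist (f u) (f v) ∈ I)

/-- A graph is a PCG if it is realized by some finite weighted tree together with
an interval `[a, b]` of nonnegative reals. -/
def IsPCG {V : Type} (G : SimpleGraph V) : Prop :=
  ∃ (W : Type) (_ : Fintype W) (T : WTree W) (a b : ℝ) (f : V → W),
    0 ≤ a ∧ IsPCGOn G T (Set.Icc a b) f

/-- A graph is a `k`-interval-PCG if it is realized by a finite weighted tree together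
with `k` pairwise disjoint intervals of nonnegative reals, an edge being present iff
the corresponding leaf distance lies in one of the intervals. -/
def IsKIntervalPCG {V : Type} (k : ℕ) (G : SimpleGraph V) : Prop :=
  ∃ (W : Type) (_ : Fintype W) (T : WTree W) (I : Fin k → Set ℝ) (f : V → W),
    (∀ i, ∃ a b : ℝ, 0 ≤ a ∧ I i = Set.Icc a b) ∧
    Pairwise (Function.onFun Disjoint I) ∧
    Function.Injective f ∧ (∀ v, T.IsLeaf (f v)) ∧ (∀ w, T.IsLeaf w → ∃ v, f v = w) ∧
    ∀ u v, u ≠ v → (G.Adj u v ↔ ∃ i, T.dist (f u) (f v) ∈ I i)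

/-- A graph is a `k`-OR-PCG if its edge set is the union of the edge sets of `k` PCGs
on the same vertex set. -/
def IsORPCG {V : Type} (k : ℕ) (G : SimpleGraph V) : Prop :=
  ∃ Gs : Fin k → SimpleGraph V, (∀ i, IsPCG (Gs i)) ∧ G = ⨆ i, Gs i

/-- A graph is a `k`-AND-PCG if its edge set is the intersection of the edge sets of
`k` PCGs on the same vertex set. -/
def IsANDPCG {V : Type} (k : ℕ) (G : SimpleGraph V) : Prop :=
  ∃ Gs : Fin k → SimpleGraph V, (∀ i, IsPCG (Gs i)) ∧ G = ⨅ i, Gs i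

/-- The vertex type of the graph `G_k`: the vertex `x`, the vertex `y`, and the
vertices `u_1,…,u_{2k-2}` and `v_1,…,v_{2k-2}` (0-indexed here: index `j : Fin (2k-2)`
corresponds to the paper's index `j+1`). -/
abbrev VGk (k : ℕ) := Unit ⊕ Unit ⊕ Fin (2 * k - 2) ⊕ Fin (2 * k - 2)

def xk (k : ℕ) : VGk k := Sum.inl ()
def yk (k : ℕ) : VGk k := Sum.inr (Sum.inl ())
def uk (k : ℕ) (j : Fin (2 * k - 2)) : VGk k := Sum.inr (Sum.inr (Sum.inl j))
def vk (k : ℕ) (j : Fin (2 * k - 2)) : VGk k := Sum.inr (Sum.inr (Sum.inr j))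

/-- The bipartite graph `G_k`, with edges `{x,y}` and `{x, u_j}`, `{x, v_j}` exactly for odd
(1-based) indices `j`, i.e. for even `j : Fin (2k-2)` in our 0-based indexing. -/
def Gk (k : ℕ) : SimpleGraph (VGk k) :=
  SimpleGraph.fromRel (fun a b =>
    (a = xk k ∧ b = yk k) ∨
    (∃ j : Fin (2 * k - 2), Even (j : ℕ) ∧ a = xk k ∧ (b = uk k j ∨ b = vk k j)))

/-- The set of leaves `[u_i, v_i] = {u_i, u_{i+1}, …, u_{2k-2}, y, v_{2k-2}, …, v_i}`. -/
def Sk (k : ℕ) (i : Fin (2 * k - 2)) : Set (VGk k) :=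
  {yk k} ∪ {z | ∃ j : Fin (2 * k - 2), i ≤ j ∧ (z = uk k j ∨ z = vk k j)}

namespace WTree

variable {W : Type} (T : WTree W)

@[simp] lemma walkWeight_nil {u : W} : T.walkWeight (.nil : T.g.Walk u u) = 0 := rfl

@[simp] lemma walkWeight_cons {u v x : W} (h : T.g.Adj u v) (p : T.g.Walk v x) :
    T.walkWeight (.cons h p) = T.wt u v + T.walkWeight p := rfl

lemma walkWeight_nonneg : ∀ {u v : W} (p : T.g.Walk u v), 0 ≤ T.walkWeight p
  | _, _, .nil => le_refl 0
  | _, _, .cons _ p => add_nonneg (T.wt_nonneg _ _) (walkWeight_nonneg p)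

lemma walkWeight_append : ∀ {u v x : W} (p : T.g.Walk u v) (q : T.g.Walk v x),
    T.walkWeight (p.append q) = T.walkWeight p + T.walkWeight q
  | _, _, _, .nil, q => by simp
  | _, _, _, .cons h p, q => by
      simp only [SimpleGraph.Walk.cons_append, walkWeight_cons,
        walkWeight_append p q, add_assoc]

lemma walkWeight_reverse : ∀ {u v : W} (p : T.g.Walk u v),
    T.walkWeight p.reverse = T.walkWeight p
  | _, _, .nil => rfl
  | _, _, .cons h p => by
      rw [SimpleGraph.Walk.reverse_cons, walkWeight_append, walkWeight_reverse p,
        walkWeight_cons, walkWeight_nil, walkWeight_cons, T.wt_symm]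
      ring

lemma dist_eq_walkWeight {u v : W} (p : T.g.Walk u v) (hp : p.IsPath) :
    T.dist u v = T.walkWeight p := by
  letI := Classical.decEq W
  have h := T.acyclic.path_unique ((T.conn.preconnected u v).some.toPath) ⟨p, hp⟩
  unfold dist
  rw [h]

lemma dist_comm (u v : W) : T.dist u v = T.dist v u := by
  letI := Classical.decEq W
  have p := (T.conn.preconnected u v).some.toPath
  rw [T.dist_eq_walkWeight (p : T.g.Walk u v) p.2,
    T.dist_eq_walkWeight ((p : T.g.Walk u v).reverse) p.2.reverse, walkWeight_reverse]

lemma walkWeight_dropUntil_le [DecidableEq W] {u v m : W} (p : T.g.Walk u v)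
    (h : m ∈ p.support) : T.walkWeight (p.dropUntil m h) ≤ T.walkWeight p := by
  conv_rhs => rw [← p.take_spec h]
  rw [walkWeight_append]
  have := T.walkWeight_nonneg (p.takeUntil m h)
  linarith

lemma walkWeight_bypass_le [DecidableEq W] :
    ∀ {u v : W} (p : T.g.Walk u v), T.walkWeight p.bypass ≤ T.walkWeight p
  | _, _, .nil => le_refl _
  | _, _, .cons h p => by
      simp only [SimpleGraph.Walk.bypass]
      split_ifs with hs
      · refine le_trans (T.walkWeight_dropUntil_le _ hs)
          (le_trans (walkWeight_bypass_le p) ?_)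
        rw [walkWeight_cons]
        exact le_add_of_nonneg_left (T.wt_nonneg _ _)
      · rw [walkWeight_cons, walkWeight_cons]
        exact add_le_add le_rfl (walkWeight_bypass_le p)

lemma dist_le_walkWeight {u v : W} (p : T.g.Walk u v) :
    T.dist u v ≤ T.walkWeight p := by
  classical
  rw [T.dist_eq_walkWeight p.bypass p.bypass_isPath]
  exact T.walkWeight_bypass_le p

lemma dist_triangle (u v w : W) : T.dist u w ≤ T.dist u v + T.dist v w := by
  classical
  have p := (T.conn.preconnected u v).some.toPath
  have q := (T.conn.preconnected v w).some.toPath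
  rw [T.dist_eq_walkWeight (p : T.g.Walk u v) p.2, T.dist_eq_walkWeight (q : T.g.Walk v w) q.2,
    ← walkWeight_append]
  exact T.dist_le_walkWeight _

lemma dist_split [DecidableEq W] {u v m : W} (p : T.g.Walk u v) (hp : p.IsPath)
    (hm : m ∈ p.support) : T.dist u v = T.dist u m + T.dist m v := by
  have h1 : T.dist u m = T.walkWeight (p.takeUntil m hm) :=
    T.dist_eq_walkWeight _ (hp.takeUntil hm)
  have h2 : T.dist m v = T.walkWeight (p.dropUntil m hm) :=
    T.dist_eq_walkWeight _ (hp.dropUntil hm)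
  rw [T.dist_eq_walkWeight p hp, h1, h2, ← walkWeight_append, p.take_spec hm]

lemma isPath_append {u m v : W} {p : T.g.Walk u m} {q : T.g.Walk m v} (hp : p.IsPath)
    (hq : q.IsPath) (hint : ∀ z ∈ p.support, z ∈ q.support → z = m) :
    (p.append q).IsPath := by
  rw [SimpleGraph.Walk.isPath_def, SimpleGraph.Walk.support_append]
  have hm_not : m ∉ q.support.tail := by
    have hnd := hq.support_nodup
    rw [q.support_eq_cons] at hnd
    exact (List.nodup_cons.mp hnd).1
  refine List.Nodup.append hp.support_nodup
    ((List.tail_sublist _).nodup hq.support_nodup) ?_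
  intro z hz hz'
  have hzq : z ∈ q.support := by
    rw [q.support_eq_cons]
    exact List.mem_cons_of_mem _ hz'
  exact hm_not (by rwa [hint z hz hzq] at hz')

lemma exists_gate [DecidableEq W] (S : Set W) :
    ∀ {w u : W} (Q : T.g.Walk w u), u ∈ S →
      ∃ m ∈ S, ∃ Q1 : T.g.Walk w m, Q1.IsPath ∧ ∀ z ∈ Q1.support, z ∈ S → z = m := by
  intro w u Q
  induction Q with
  | nil =>
    intro hu
    exact ⟨_, hu, .nil, by simp, by simp⟩
  | @cons a b c h Q ih =>
    intro hu
    by_cases hw : a ∈ S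
    · exact ⟨a, hw, .nil, by simp, by simp⟩
    · obtain ⟨m, hmS, Q1, hQ1, hprop⟩ := ih hu
      refine ⟨m, hmS, ((SimpleGraph.Walk.cons h Q1).toPath : T.g.Walk a m),
        (SimpleGraph.Walk.cons h Q1).toPath.2, ?_⟩
      intro z hz hzS
      have hz' : z ∈ (SimpleGraph.Walk.cons h Q1).support :=
        (SimpleGraph.Walk.cons h Q1).support_bypass_subset hz
      rw [SimpleGraph.Walk.support_cons] at hz'
      rcases List.mem_cons.mp hz' with rfl | hz''
      · exact absurd hzS hw
      · exact hprop z hz'' hzS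

lemma exists_median [DecidableEq W] {u v : W} (P : T.g.Walk u v) (hP : P.IsPath) (x : W) :
    ∃ m ∈ P.support, T.dist x u = T.dist x m + T.dist m u ∧
      T.dist x v = T.dist x m + T.dist m v := by
  have Q := (T.conn.preconnected x u).some
  obtain ⟨m, hmP, Q1, hQ1, hgate⟩ := T.exists_gate {z | z ∈ P.support} Q P.start_mem_support
  have hmP' : m ∈ P.support := hmP
  refine ⟨m, hmP', ?_, ?_⟩
  · have htake : (P.takeUntil m hmP').IsPath := hP.takeUntil hmP'
    have happ : (Q1.append (P.takeUntil m hmP').reverse).IsPath := by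
      refine T.isPath_append hQ1 htake.reverse ?_
      intro z hz hz'
      rw [SimpleGraph.Walk.support_reverse, List.mem_reverse] at hz'
      exact hgate z hz (P.support_takeUntil_subset hmP' hz')
    have hmu : T.dist m u = T.walkWeight (P.takeUntil m hmP') := by
      rw [T.dist_eq_walkWeight (P.takeUntil m hmP').reverse htake.reverse, walkWeight_reverse]
    rw [T.dist_eq_walkWeight _ happ, walkWeight_append, walkWeight_reverse,
      T.dist_eq_walkWeight Q1 hQ1, hmu]
  · have hdrop : (P.dropUntil m hmP').IsPath := hP.dropUntil hmP'
    have happ : (Q1.append (P.dropUntil m hmP')).IsPath := by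
      refine T.isPath_append hQ1 hdrop ?_
      intro z hz hz'
      exact hgate z hz (P.support_dropUntil_subset hmP' hz')
    have hmv : T.dist m v = T.walkWeight (P.dropUntil m hmP') :=
      T.dist_eq_walkWeight _ hdrop
    rw [T.dist_eq_walkWeight _ happ, walkWeight_append, T.dist_eq_walkWeight Q1 hQ1, hmv]

lemma mem_dropUntil_or [DecidableEq W] {u v m m' : W} (p : T.g.Walk u v) (hp : p.IsPath)
    (hm : m ∈ p.support) (hm' : m' ∈ p.support) :
    m' ∈ (p.dropUntil m hm).support ∨ m ∈ (p.dropUntil m' hm').support := by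
  have hsp := p.take_spec hm
  have hcases : m' ∈ (p.takeUntil m hm).support ∨ m' ∈ (p.dropUntil m hm).support := by
    rw [← SimpleGraph.Walk.mem_support_append_iff, hsp]
    exact hm'
  rcases hcases with h1 | h2
  · right
    have hAp : (p.takeUntil m hm).IsPath := hp.takeUntil hm
    have hsp2 := (p.takeUntil m hm).take_spec h1
    have hPR : (((p.takeUntil m hm).takeUntil m' h1).append
        (((p.takeUntil m hm).dropUntil m' h1).append (p.dropUntil m hm))) = p := by
      rw [SimpleGraph.Walk.append_assoc, hsp2, hsp]
    have hRpath : (((p.takeUntil m hm).dropUntil m' h1).append (p.dropUntil m hm)).IsPath := by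
      have hPp : (((p.takeUntil m hm).takeUntil m' h1).append
          (((p.takeUntil m hm).dropUntil m' h1).append (p.dropUntil m hm))).IsPath := by
        rw [hPR]; exact hp
      exact hPp.of_append_right
    have hEq : p.dropUntil m' hm' =
        ((p.takeUntil m hm).dropUntil m' h1).append (p.dropUntil m hm) := by
      have huniq : (⟨p.dropUntil m' hm', hp.dropUntil hm'⟩ : T.g.Path m' v) =
          ⟨((p.takeUntil m hm).dropUntil m' h1).append (p.dropUntil m hm), hRpath⟩ :=
        T.acyclic.path_unique _ _
      exact congrArg Subtype.val huniq
    rw [hEq, SimpleGraph.Walk.mem_support_append_iff]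
    left
    exact SimpleGraph.Walk.end_mem_support _
  · left
    exact h2

lemma four_point (x u v w : W) :
    T.dist x w + T.dist u v ≤ max (T.dist x u + T.dist v w) (T.dist x v + T.dist u w) := by
  classical
  have P := (T.conn.preconnected u v).some.toPath
  obtain ⟨m, hm, hxu, hxv⟩ := T.exists_median (P : T.g.Walk u v) P.2 x
  obtain ⟨m', hm', hwu, hwv⟩ := T.exists_median (P : T.g.Walk u v) P.2 w
  have huv_m : T.dist u v = T.dist u m + T.dist m v := T.dist_split _ P.2 hm
  have huv_m' : T.dist u v = T.dist u m' + T.dist m' v := T.dist_split _ P.2 hm'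
  have htri : T.dist x w ≤ T.dist x m + (T.dist m m' + T.dist m' w) :=
    le_trans (T.dist_triangle x m w) (by linarith [T.dist_triangle m m' w])
  have cum : T.dist m u = T.dist u m := T.dist_comm m u
  have cum' : T.dist m' u = T.dist u m' := T.dist_comm m' u
  have cwu : T.dist u w = T.dist m' w + T.dist u m' := by
    rw [T.dist_comm u w, hwu, T.dist_comm w m', T.dist_comm m' u]
  have cwv : T.dist v w = T.dist m' w + T.dist v m' := by
    rw [T.dist_comm v w, hwv, T.dist_comm w m', T.dist_comm m' v]
  have cmm : T.dist m m' = T.dist m' m := T.dist_comm m m'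
  rcases T.mem_dropUntil_or (P : T.g.Walk u v) P.2 hm hm' with hcase | hcase
  · have hsplit : T.dist m v = T.dist m m' + T.dist m' v :=
      T.dist_split ((P : T.g.Walk u v).dropUntil m hm) (P.2.dropUntil hm) hcase
    refine le_trans ?_ (le_max_right _ _)
    have hvm' : T.dist m' v = T.dist v m' := T.dist_comm m' v
    linarith
  · have hsplit : T.dist m' v = T.dist m' m + T.dist m v :=
      T.dist_split ((P : T.g.Walk u v).dropUntil m' hm') (P.2.dropUntil hm') hcase
    refine le_trans ?_ (le_max_left _ _)
    have hvm' : T.dist m' v = T.dist v m' := T.dist_comm m' v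
    linarith

lemma dist_le_max (u v w : W) (h1 : T.dist u w ≤ T.dist u v) (h2 : T.dist v w ≤ T.dist u v)
    (x : W) : T.dist x w ≤ max (T.dist x u) (T.dist x v) := by
  have h := T.four_point x u v w
  rcases max_cases (T.dist x u + T.dist v w) (T.dist x v + T.dist u w) with ⟨he, _⟩ | ⟨he, _⟩ <;>
    rw [he] at h
  · have : T.dist x w ≤ T.dist x u := by linarith
    exact le_trans this (le_max_left _ _)
  · have : T.dist x w ≤ T.dist x v := by linarith
    exact le_trans this (le_max_right _ _)

end WTree

section GkLemmas

variable {k : ℕ}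

lemma uk_inj {j j' : Fin (2 * k - 2)} (h : uk k j = uk k j') : j = j' := by
  simpa [uk] using h

lemma yk_mem_Sk (i : Fin (2 * k - 2)) : yk k ∈ Sk k i := Or.inl rfl

lemma uk_mem_Sk {i j : Fin (2 * k - 2)} (h : i ≤ j) : uk k j ∈ Sk k i :=
  Or.inr ⟨j, h, Or.inl rfl⟩

lemma vk_mem_Sk {i j : Fin (2 * k - 2)} (h : i ≤ j) : vk k j ∈ Sk k i :=
  Or.inr ⟨j, h, Or.inr rfl⟩

lemma gk_adj_xy : (Gk k).Adj (xk k) (yk k) := by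
  rw [Gk, SimpleGraph.fromRel_adj]
  exact ⟨by simp [xk, yk], Or.inl (Or.inl ⟨rfl, rfl⟩)⟩

lemma gk_adj_xu (j : Fin (2 * k - 2)) (hj : Even (j : ℕ)) :
    (Gk k).Adj (xk k) (uk k j) := by
  rw [Gk, SimpleGraph.fromRel_adj]
  exact ⟨by simp [xk, uk], Or.inl (Or.inr ⟨j, hj, rfl, Or.inl rfl⟩)⟩

lemma gk_adj_xv (j : Fin (2 * k - 2)) (hj : Even (j : ℕ)) :
    (Gk k).Adj (xk k) (vk k j) := by
  rw [Gk, SimpleGraph.fromRel_adj]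
  exact ⟨by simp [xk, vk], Or.inl (Or.inr ⟨j, hj, rfl, Or.inr rfl⟩)⟩

lemma gk_nadj_xu (j : Fin (2 * k - 2)) (hj : ¬ Even (j : ℕ)) :
    ¬ (Gk k).Adj (xk k) (uk k j) := by
  intro h
  rw [Gk, SimpleGraph.fromRel_adj] at h
  rcases h.2 with (⟨_, hy⟩ | ⟨j', hev, _, hj'⟩) | (⟨hx, _⟩ | ⟨j', _, hx, _⟩)
  · exact absurd hy (by simp [uk, yk])
  · rcases hj' with h' | h'
    · exact hj (by rw [uk_inj h']; exact hev)
    · exact absurd h' (by simp [uk, vk])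
  · exact absurd hx (by simp [uk, xk])
  · exact absurd hx (by simp [uk, xk])

lemma gk_nadj_xv (j : Fin (2 * k - 2)) (hj : ¬ Even (j : ℕ)) :
    ¬ (Gk k).Adj (xk k) (vk k j) := by
  intro h
  rw [Gk, SimpleGraph.fromRel_adj] at h
  rcases h.2 with (⟨_, hy⟩ | ⟨j', hev, _, hj'⟩) | (⟨hx, _⟩ | ⟨j', _, hx, _⟩)
  · exact absurd hy (by simp [vk, yk])
  · rcases hj' with h' | h'
    · exact absurd h' (by simp [uk, vk])
    · exact hj (by rw [show j = j' by simpa [vk] using h']; exact hev)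
  · exact absurd hx (by simp [vk, xk])
  · exact absurd hx (by simp [vk, xk])

end GkLemmas

/-- If `G` contains `G_k` (`k ≥ 2`) as an induced subgraph and `G` is realized as a
`t`-interval-PCG on a tree `T` such that for each `i` the path `P_T(u_i, v_i)` is a longest
path in the subtree of `T` spanned by the leaves `[u_i, v_i]`, then `t ≥ k`. -/
theorem Gk_forces_k_intervals {V : Type} [Fintype V] (k : ℕ) (hk : 2 ≤ k)
    (G : SimpleGraph V) (t : ℕ) (W : Type) [Fintype W] (T : WTree W)
    (I : Fin t → Set ℝ) (f : V → W)
    (hI : ∀ i, ∃ a b : ℝ, 0 ≤ a ∧ I i = Set.Icc a b)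
    (hdisj : Pairwise (Function.onFun Disjoint I))
    (hinj : Function.Injective f)
    (hleaf : ∀ v, T.IsLeaf (f v))
    (hsurj : ∀ w, T.IsLeaf w → ∃ v, f v = w)
    (hadj : ∀ a b : V, a ≠ b → (G.Adj a b ↔ ∃ i, T.dist (f a) (f b) ∈ I i))
    (φ : Gk k ↪g G)
    (hlong : ∀ i : Fin (2 * k - 2), ∀ p ∈ Sk k i, ∀ q ∈ Sk k i,
      T.dist (f (φ p)) (f (φ q)) ≤ T.dist (f (φ (uk k i))) (f (φ (vk k i)))) :
    k ≤ t := by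
  classical
  -- Transfer of adjacency along the embedding.
  have hGadj : ∀ a b : VGk k, (Gk k).Adj a b →
      ∃ i, T.dist (f (φ a)) (f (φ b)) ∈ I i := by
    intro a b hab
    have hne : φ a ≠ φ b := φ.injective.ne hab.ne
    exact (hadj _ _ hne).mp (φ.map_adj_iff.mpr hab)
  have hGnadj : ∀ a b : VGk k, a ≠ b → ¬ (Gk k).Adj a b →
      ∀ i, T.dist (f (φ a)) (f (φ b)) ∉ I i := by
    intro a b hne hnadj i hi
    exact hnadj (φ.map_adj_iff.mp ((hadj _ _ (φ.injective.ne hne)).mpr ⟨i, hi⟩))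
  -- The key sequence of distances from x.
  set M : ℕ → ℝ := fun j =>
    if h : j < 2 * k - 2 then
      max (T.dist (f (φ (xk k))) (f (φ (uk k ⟨j, h⟩))))
        (T.dist (f (φ (xk k))) (f (φ (vk k ⟨j, h⟩))))
    else T.dist (f (φ (xk k))) (f (φ (yk k))) with hM
  have Mpos : ∀ (j : ℕ) (h : j < 2 * k - 2),
      M j = max (T.dist (f (φ (xk k))) (f (φ (uk k ⟨j, h⟩))))
        (T.dist (f (φ (xk k))) (f (φ (vk k ⟨j, h⟩)))) := fun j h => dif_pos h
  have Mneg : ∀ (j : ℕ), ¬ j < 2 * k - 2 →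
      M j = T.dist (f (φ (xk k))) (f (φ (yk k))) := fun j h => dif_neg h
  -- Every leaf in `Sk` is at distance at most `M j` from x.
  have bound : ∀ (j : ℕ) (h : j < 2 * k - 2), ∀ w ∈ Sk k ⟨j, h⟩,
      T.dist (f (φ (xk k))) (f (φ w)) ≤ M j := by
    intro j h w hw
    have h1 := hlong ⟨j, h⟩ (uk k ⟨j, h⟩) (uk_mem_Sk (le_refl _)) w hw
    have h2 := hlong ⟨j, h⟩ (vk k ⟨j, h⟩) (vk_mem_Sk (le_refl _)) w hw
    have hkey := T.dist_le_max _ _ _ h1 h2 (f (φ (xk k)))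
    rw [Mpos j h]
    exact hkey
  have mono : ∀ j : ℕ, M (j + 1) ≤ M j := by
    intro j
    by_cases h1 : j + 1 < 2 * k - 2
    · have h0 : j < 2 * k - 2 := lt_trans (Nat.lt_succ_self j) h1
      rw [Mpos (j + 1) h1]
      refine max_le ?_ ?_
      · exact bound j h0 (uk k ⟨j + 1, h1⟩) (uk_mem_Sk (Nat.le_succ j))
      · exact bound j h0 (vk k ⟨j + 1, h1⟩) (vk_mem_Sk (Nat.le_succ j))
    · by_cases h0 : j < 2 * k - 2
      · rw [Mneg (j + 1) h1]
        exact bound j h0 (yk k) (yk_mem_Sk _)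
      · rw [Mneg (j + 1) h1, Mneg j h0]
  have manti : Antitone M := antitone_nat_of_succ_le mono
  -- The values M (2*i) all lie in some interval.
  have inA : ∀ i : ℕ, i < k → ∃ s, M (2 * i) ∈ I s := by
    intro i hi
    by_cases hil : i < k - 1
    · have h2i : 2 * i < 2 * k - 2 := by omega
      have hev : Even (((⟨2 * i, h2i⟩ : Fin (2 * k - 2)) : ℕ)) := even_two_mul i
      have hau := hGadj _ _ (gk_adj_xu ⟨2 * i, h2i⟩ hev)
      have hav := hGadj _ _ (gk_adj_xv ⟨2 * i, h2i⟩ hev)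
      rcases max_choice (T.dist (f (φ (xk k))) (f (φ (uk k ⟨2 * i, h2i⟩))))
        (T.dist (f (φ (xk k))) (f (φ (vk k ⟨2 * i, h2i⟩)))) with hc | hc
      · obtain ⟨s, hs⟩ := hau
        exact ⟨s, by rw [Mpos _ h2i, hc]; exact hs⟩
      · obtain ⟨s, hs⟩ := hav
        exact ⟨s, by rw [Mpos _ h2i, hc]; exact hs⟩
    · have h2i : ¬ 2 * i < 2 * k - 2 := by omega
      obtain ⟨s, hs⟩ := hGadj _ _ (gk_adj_xy (k := k))
      exact ⟨s, by rw [Mneg _ h2i]; exact hs⟩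
  -- The values M (2*i+1) (for i < k-1) lie in no interval.
  have outB : ∀ i : ℕ, i < k - 1 → ∀ s, M (2 * i + 1) ∉ I s := by
    intro i hi s hs
    have h2i : 2 * i + 1 < 2 * k - 2 := by omega
    have hodd : ¬ Even (((⟨2 * i + 1, h2i⟩ : Fin (2 * k - 2)) : ℕ)) := by
      simp [Nat.even_add_one, parity_simps]
    have hnu := hGnadj _ _ (by simp [xk, uk]) (gk_nadj_xu ⟨2 * i + 1, h2i⟩ hodd) s
    have hnv := hGnadj _ _ (by simp [xk, vk]) (gk_nadj_xv ⟨2 * i + 1, h2i⟩ hodd) s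
    rcases max_choice (T.dist (f (φ (xk k))) (f (φ (uk k ⟨2 * i + 1, h2i⟩))))
      (T.dist (f (φ (xk k))) (f (φ (vk k ⟨2 * i + 1, h2i⟩)))) with hc | hc
    · exact hnu (by rw [Mpos _ h2i, hc] at hs; exact hs)
    · exact hnv (by rw [Mpos _ h2i, hc] at hs; exact hs)
  -- Choose, for each i < k, an interval containing M (2*i); this is injective.
  have hchoice : ∀ i : Fin k, ∃ s, M (2 * (i : ℕ)) ∈ I s := fun i => inA i i.isLt
  choose g hg using hchoice
  have hmain : ∀ a b : Fin k, a < b → g a = g b → False := by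
    intro a b hab heq
    obtain ⟨A, B, _, hIs⟩ := hI (g a)
    have h1 : M (2 * (a : ℕ)) ∈ Set.Icc A B := by rw [← hIs]; exact hg a
    have h2 : M (2 * (b : ℕ)) ∈ Set.Icc A B := by rw [← hIs, heq]; exact hg b
    have hav : (a : ℕ) < (b : ℕ) := hab
    have hsep : M (2 * (a : ℕ) + 1) ∈ Set.Icc A B :=
      ⟨le_trans h2.1 (manti (by omega : 2 * (a : ℕ) + 1 ≤ 2 * (b : ℕ))),
        le_trans (manti (Nat.le_succ _)) h1.2⟩
    have hak : (a : ℕ) < k - 1 := by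
      have := b.isLt
      omega
    exact outB a hak (g a) (by rw [hIs]; exact hsep)
  have hginj : Function.Injective g := by
    intro a b heq
    rcases lt_trichotomy a b with h | h | h
    · exact absurd (hmain a b h heq) (not_false)
    · exact h
    · exact absurd (hmain b a h heq.symm) (not_false)
  calc k = Fintype.card (Fin k) := (Fintype.card_fin k).symm
    _ ≤ Fintype.card (Fin t) := Fintype.card_le_of_injective g hginj
    _ = t := Fintype.card_fin t
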